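/- Bloch vectors of two-qubit tetrahedral fiducial states: for any real phases α_{z,x}, the state ψ is a unit vector and its Bloch components are x₁ = ½[cos(α_{1,0}−α_{0,0}) + cos(α_{1,1}−α_{0,1})], y₁ = ½[sin(α_{1,0}−α_{0,1}) + sin(α_{1,1}−α_{0,0})], z₁ = ½[cos(α_{0,1}−α_{0,0}) − cos(α_{1,1}−α_{1,0})], x₂ = ½[cos(α_{1,0}−α_{0,0}) − cos(α_{1,1}−α_{0,1})], y₂ = ½[sin(α_{1,0}−α_{0,1}) − sin(α_{1,1}−α_{0,0})], z₂ = ½[cos(α_{0,1}−α_{0,0}) + cos(α_{1,1}−α_{1,0})]. -/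
import Mathlib


open Matrix Complex Finset Kronecker

/-- Pauli X. -/
noncomputable def X2 : Matrix (Fin 2) (Fin 2) ℂ := !![0, 1; 1, 0]

/-- Pauli Y. -/
noncomputable def Y2 : Matrix (Fin 2) (Fin 2) ℂ := !![0, -Complex.I; Complex.I, 0]

/-- Pauli Z. -/
noncomputable def Z2 : Matrix (Fin 2) (Fin 2) ℂ := !![1, 0; 0, -1]

/-- The inner product ⟨f, g⟩ = Σ conj(f v) g v (antilinear in the first argument). -/
noncomputable def dotc {ι : Type*} [Fintype ι] (f g : ι → ℂ) : ℂ :=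
  ∑ v, (starRingEnd ℂ) (f v) * g v

/-- Two-qubit computational basis vector |ab⟩. -/
noncomputable def bv (a b : Fin 2) : Fin 2 × Fin 2 → ℂ := fun p => if p = (a, b) then 1 else 0

/-- Bell state Φ_{0,0} = (|00⟩+|11⟩)/√2. -/
noncomputable def Bell00 : Fin 2 × Fin 2 → ℂ := (Real.sqrt 2 : ℂ)⁻¹ • (bv 0 0 + bv 1 1)

/-- Bell state Φ_{0,1} = (|00⟩−|11⟩)/√2. -/
noncomputable def Bell01 : Fin 2 × Fin 2 → ℂ := (Real.sqrt 2 : ℂ)⁻¹ • (bv 0 0 - bv 1 1)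

/-- Bell state Φ_{1,0} = (|01⟩+|10⟩)/√2. -/
noncomputable def Bell10 : Fin 2 × Fin 2 → ℂ := (Real.sqrt 2 : ℂ)⁻¹ • (bv 0 1 + bv 1 0)

/-- Bell state Φ_{1,1} = (−|01⟩+|10⟩)/√2. -/
noncomputable def Bell11 : Fin 2 × Fin 2 → ℂ := (Real.sqrt 2 : ℂ)⁻¹ • (-(bv 0 1) + bv 1 0)

/-- The fiducial state ψ = (1/2) Σ_{z,x} e^{iα_{z,x}} Φ_{z,x}. -/
noncomputable def psiF (α : Fin 2 → Fin 2 → ℝ) : Fin 2 × Fin 2 → ℂ :=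
  (1 / 2 : ℂ) • (Complex.exp ((α 0 0 : ℝ) * Complex.I) • Bell00 +
    Complex.exp ((α 0 1 : ℝ) * Complex.I) • Bell01 +
    Complex.exp ((α 1 0 : ℝ) * Complex.I) • Bell10 +
    Complex.exp ((α 1 1 : ℝ) * Complex.I) • Bell11)

/-- Bloch component x₁ = ⟨ψ,(X⊗I)ψ⟩. -/
noncomputable def blochX1 (α : Fin 2 → Fin 2 → ℝ) : ℂ :=
  dotc (psiF α) ((X2 ⊗ₖ (1 : Matrix (Fin 2) (Fin 2) ℂ)) *ᵥ psiF α)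

/-- Bloch component y₁ = ⟨ψ,(Y⊗I)ψ⟩. -/
noncomputable def blochY1 (α : Fin 2 → Fin 2 → ℝ) : ℂ :=
  dotc (psiF α) ((Y2 ⊗ₖ (1 : Matrix (Fin 2) (Fin 2) ℂ)) *ᵥ psiF α)

/-- Bloch component z₁ = ⟨ψ,(Z⊗I)ψ⟩. -/
noncomputable def blochZ1 (α : Fin 2 → Fin 2 → ℝ) : ℂ :=
  dotc (psiF α) ((Z2 ⊗ₖ (1 : Matrix (Fin 2) (Fin 2) ℂ)) *ᵥ psiF α)

/-- Bloch component x₂ = ⟨ψ,(I⊗X)ψ⟩. -/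
noncomputable def blochX2 (α : Fin 2 → Fin 2 → ℝ) : ℂ :=
  dotc (psiF α) (((1 : Matrix (Fin 2) (Fin 2) ℂ) ⊗ₖ X2) *ᵥ psiF α)

/-- Bloch component y₂ = ⟨ψ,(I⊗Y)ψ⟩. -/
noncomputable def blochY2 (α : Fin 2 → Fin 2 → ℝ) : ℂ :=
  dotc (psiF α) (((1 : Matrix (Fin 2) (Fin 2) ℂ) ⊗ₖ Y2) *ᵥ psiF α)

/-- Bloch component z₂ = ⟨ψ,(I⊗Z)ψ⟩. -/
noncomputable def blochZ2 (α : Fin 2 → Fin 2 → ℝ) : ℂ :=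
  dotc (psiF α) (((1 : Matrix (Fin 2) (Fin 2) ℂ) ⊗ₖ Z2) *ᵥ psiF α)


-- Auxiliary lemmas ----------------------------------------------------------

lemma conj_mul_exp_mul_I (x : ℝ) :
    (starRingEnd ℂ) (Complex.exp ((x : ℂ) * Complex.I)) * Complex.exp ((x : ℂ) * Complex.I) = 1 := by
  rw [← Complex.exp_conj, _root_.map_mul, Complex.conj_I, Complex.conj_ofReal, mul_neg,
    ← Complex.exp_add]
  simp

lemma cos_sub_exp (x y : ℝ) :
    Complex.cos ((x : ℂ) - (y : ℂ)) =
      (Complex.exp ((x : ℂ) * Complex.I) * (starRingEnd ℂ) (Complex.exp ((y : ℂ) * Complex.I)) +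
        Complex.exp ((y : ℂ) * Complex.I) * (starRingEnd ℂ) (Complex.exp ((x : ℂ) * Complex.I))) / 2 := by
  rw [← Complex.exp_conj, ← Complex.exp_conj, _root_.map_mul, _root_.map_mul, Complex.conj_I,
    Complex.conj_ofReal, Complex.conj_ofReal, Complex.cos, ← Complex.exp_add, ← Complex.exp_add]
  have h1 : ((x : ℂ) - y) * Complex.I = (x : ℂ) * Complex.I + (y : ℂ) * -Complex.I := by ring
  have h2 : -(((x : ℂ) - y)) * Complex.I = (y : ℂ) * Complex.I + (x : ℂ) * -Complex.I := by ring
  rw [h1, h2]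

lemma sin_sub_exp (x y : ℝ) :
    Complex.sin ((x : ℂ) - (y : ℂ)) =
      (Complex.exp ((y : ℂ) * Complex.I) * (starRingEnd ℂ) (Complex.exp ((x : ℂ) * Complex.I)) -
        Complex.exp ((x : ℂ) * Complex.I) * (starRingEnd ℂ) (Complex.exp ((y : ℂ) * Complex.I))) *
        Complex.I / 2 := by
  rw [← Complex.exp_conj, ← Complex.exp_conj, _root_.map_mul, _root_.map_mul, Complex.conj_I,
    Complex.conj_ofReal, Complex.conj_ofReal, Complex.sin, ← Complex.exp_add, ← Complex.exp_add]
  have h1 : ((x : ℂ) - y) * Complex.I = (x : ℂ) * Complex.I + (y : ℂ) * -Complex.I := by ring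
  have h2 : -(((x : ℂ) - y)) * Complex.I = (y : ℂ) * Complex.I + (x : ℂ) * -Complex.I := by ring
  rw [h1, h2]

/-- The unnormalised amplitudes of `psiF` in the computational basis. -/
noncomputable def gF (α : Fin 2 → Fin 2 → ℝ) : Fin 2 × Fin 2 → ℂ := fun p =>
  !![Complex.exp ((α 0 0 : ℝ) * Complex.I) + Complex.exp ((α 0 1 : ℝ) * Complex.I),
     Complex.exp ((α 1 0 : ℝ) * Complex.I) - Complex.exp ((α 1 1 : ℝ) * Complex.I);
     Complex.exp ((α 1 0 : ℝ) * Complex.I) + Complex.exp ((α 1 1 : ℝ) * Complex.I),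
     Complex.exp ((α 0 0 : ℝ) * Complex.I) - Complex.exp ((α 0 1 : ℝ) * Complex.I)] p.1 p.2

lemma psiF_eq (α : Fin 2 → Fin 2 → ℝ) :
    psiF α = ((1 / 2 : ℂ) * ((Real.sqrt 2 : ℂ))⁻¹) • gF α := by
  funext p
  fin_cases p <;>
    simp [psiF, gF, Bell00, Bell01, Bell10, Bell11, bv, Prod.ext_iff] <;> ring

lemma dotc_smul {ι : Type*} [Fintype ι] (c : ℂ) (f g : ι → ℂ) :
    dotc (c • f) (c • g) = (starRingEnd ℂ) c * c * dotc f g := by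
  simp only [dotc, Pi.smul_apply, smul_eq_mul, _root_.map_mul, Finset.mul_sum]
  exact Finset.sum_congr rfl fun v _ => by ring

lemma coef_sq : (starRingEnd ℂ) ((1 / 2 : ℂ) * ((Real.sqrt 2 : ℂ))⁻¹) *
    ((1 / 2 : ℂ) * ((Real.sqrt 2 : ℂ))⁻¹) = 1 / 8 := by
  have h : ((Real.sqrt 2 : ℝ) : ℂ) * ((Real.sqrt 2 : ℝ) : ℂ) = 2 := by
    rw [← Complex.ofReal_mul, Real.mul_self_sqrt (by norm_num)]; norm_num
  have hne : ((Real.sqrt 2 : ℝ) : ℂ) ≠ 0 := by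
    simp [Real.sqrt_ne_zero']
  simp only [_root_.map_mul, map_inv₀, Complex.conj_ofReal, map_div₀, _root_.map_one, map_ofNat]
  field_simp
  linear_combination (-4 : ℂ) * h

/-!
STATEMENT 6: ψ is a unit vector and its Bloch components are the stated
trigonometric expressions in the phases α_{z,x}.
-/
theorem stmt6 (α : Fin 2 → Fin 2 → ℝ) :
    dotc (psiF α) (psiF α) = 1 ∧
    blochX1 α = ((1 / 2 * (Real.cos (α 1 0 - α 0 0) + Real.cos (α 1 1 - α 0 1)) : ℝ) : ℂ) ∧
    blochY1 α = ((1 / 2 * (Real.sin (α 1 0 - α 0 1) + Real.sin (α 1 1 - α 0 0)) : ℝ) : ℂ) ∧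
    blochZ1 α = ((1 / 2 * (Real.cos (α 0 1 - α 0 0) - Real.cos (α 1 1 - α 1 0)) : ℝ) : ℂ) ∧
    blochX2 α = ((1 / 2 * (Real.cos (α 1 0 - α 0 0) - Real.cos (α 1 1 - α 0 1)) : ℝ) : ℂ) ∧
    blochY2 α = ((1 / 2 * (Real.sin (α 1 0 - α 0 1) - Real.sin (α 1 1 - α 0 0)) : ℝ) : ℂ) ∧
    blochZ2 α = ((1 / 2 * (Real.cos (α 0 1 - α 0 0) + Real.cos (α 1 1 - α 1 0)) : ℝ) : ℂ) := by
  refine ⟨?_, ?_, ?_, ?_, ?_, ?_, ?_⟩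
  · rw [psiF_eq, dotc_smul, coef_sq]
    simp [dotc, gF, Fintype.sum_prod_type, Fin.sum_univ_two]
    linear_combination (1 / 4 : ℂ) * (conj_mul_exp_mul_I (α 0 0) + conj_mul_exp_mul_I (α 0 1) +
      conj_mul_exp_mul_I (α 1 0) + conj_mul_exp_mul_I (α 1 1))
  · rw [blochX1, psiF_eq, Matrix.mulVec_smul, dotc_smul, coef_sq]
    push_cast
    rw [cos_sub_exp, cos_sub_exp]
    simp [dotc, gF, Matrix.mulVec, dotProduct, Fintype.sum_prod_type,
      Fin.sum_univ_two, Matrix.kroneckerMap_apply, X2, Matrix.one_apply]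
    ring
  · rw [blochY1, psiF_eq, Matrix.mulVec_smul, dotc_smul, coef_sq]
    push_cast
    rw [sin_sub_exp, sin_sub_exp]
    simp [dotc, gF, Matrix.mulVec, dotProduct, Fintype.sum_prod_type,
      Fin.sum_univ_two, Matrix.kroneckerMap_apply, Y2, Matrix.one_apply]
    ring
  · rw [blochZ1, psiF_eq, Matrix.mulVec_smul, dotc_smul, coef_sq]
    push_cast
    rw [cos_sub_exp, cos_sub_exp]
    simp [dotc, gF, Matrix.mulVec, dotProduct, Fintype.sum_prod_type,
      Fin.sum_univ_two, Matrix.kroneckerMap_apply, Z2, Matrix.one_apply]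
    ring
  · rw [blochX2, psiF_eq, Matrix.mulVec_smul, dotc_smul, coef_sq]
    push_cast
    rw [cos_sub_exp, cos_sub_exp]
    simp [dotc, gF, Matrix.mulVec, dotProduct, Fintype.sum_prod_type,
      Fin.sum_univ_two, Matrix.kroneckerMap_apply, X2, Matrix.one_apply]
    ring
  · rw [blochY2, psiF_eq, Matrix.mulVec_smul, dotc_smul, coef_sq]
    push_cast
    rw [sin_sub_exp, sin_sub_exp]
    simp [dotc, gF, Matrix.mulVec, dotProduct, Fintype.sum_prod_type,
      Fin.sum_univ_two, Matrix.kroneckerMap_apply, Y2, Matrix.one_apply]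
    ring
  · rw [blochZ2, psiF_eq, Matrix.mulVec_smul, dotc_smul, coef_sq]
    push_cast
    rw [cos_sub_exp, cos_sub_exp]
    simp [dotc, gF, Matrix.mulVec, dotProduct, Fintype.sum_prod_type,
      Fin.sum_univ_two, Matrix.kroneckerMap_apply, Z2, Matrix.one_apply]
    ring
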